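/- arXiv:1603.03426 — 3 statements merged into one kernel-verified Lean document; each statement's English description precedes it below -/
import Mathlib

section
/- Let p ∈ (1,∞) with conjugate exponent q and let k ∈ L^p(ℝ;L^q(ℝ)). If the integral operator Int k satisfies Int k (L^p[t,∞)) ⊆ L^p[t,∞) for every t ∈ ℝ, then k(x)(y) = 0 for almost every pair (x,y) with y > x; equivalently, Θ(k)(x) vanishes a.e. on (−∞,0) for almost every x ∈ ℝ, i.e. Θ(k) ∈ L^p(ℝ;L^q(ℝ_+)). -/
open MeasureTheory Complex Filter Topology
open scoped ENNReal NNReal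

noncomputable section

/-- `L^p(ℝ)` with complex values. -/
abbrev LpR (p : ℝ≥0∞) := MeasureTheory.Lp ℂ p (volume : Measure ℝ)

/-- The Bochner space `L^p(ℝ; L^q(ℝ))`. -/
abbrev LpLq (p q : ℝ≥0∞) [Fact (1 ≤ q)] := MeasureTheory.Lp (LpR q) p (volume : Measure ℝ)

/-- `T` is the operator of multiplication by `φ`. -/
def IsMulOp (p : ℝ≥0∞) [Fact (1 ≤ p)] (φ : ℝ → ℂ) (T : LpR p →L[ℂ] LpR p) : Prop :=
  ∀ f : LpR p, (T f : ℝ → ℂ) =ᵐ[volume] fun x => φ x * (f : ℝ → ℂ) x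

/-- `T` is the operator of translation by `μ`: `(T f)(x) = f (x - μ)`. -/
def IsTransOp (p : ℝ≥0∞) [Fact (1 ≤ p)] (μ : ℝ) (T : LpR p →L[ℂ] LpR p) : Prop :=
  ∀ f : LpR p, (T f : ℝ → ℂ) =ᵐ[volume] fun x => (f : ℝ → ℂ) (x - μ)

/-- A set of operators is closed in the strong operator topology (the topology of
pointwise norm convergence) if it contains every operator which is an SOT-limit point. -/
def IsSOTClosed (p : ℝ≥0∞) [Fact (1 ≤ p)] (S : Set (LpR p →L[ℂ] LpR p)) : Prop :=
  ∀ T : LpR p →L[ℂ] LpR p,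
    (⇑T ∈ closure ((fun A : LpR p →L[ℂ] LpR p => (A : LpR p → LpR p)) '' S)) → T ∈ S

/-- The generators of the parabolic algebra: multiplications `M_λ`, `λ ≥ 0`, and
translations `D_μ`, `μ ≥ 0`. -/
def parabolicGens (p : ℝ≥0∞) [Fact (1 ≤ p)] : Set (LpR p →L[ℂ] LpR p) :=
  {T | ∃ l : ℝ, 0 ≤ l ∧ IsMulOp p (fun x => Complex.exp (Complex.I * l * x)) T} ∪
  {T | ∃ m : ℝ, 0 ≤ m ∧ IsTransOp p m T}

/-- The parabolic algebra: the smallest SOT-closed subalgebra of `B(L^p(ℝ))` containing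
the multiplication semigroup and the translation semigroup. -/
def parabolicAlgebra (p : ℝ≥0∞) [Fact (1 ≤ p)] : Set (LpR p →L[ℂ] LpR p) :=
  ⋂₀ {S | parabolicGens p ⊆ S ∧ IsSOTClosed p S ∧
      ∃ A : Subalgebra ℂ (LpR p →L[ℂ] LpR p), (A : Set (LpR p →L[ℂ] LpR p)) = S}

/-- The Hardy space `H^p(ℝ)`, as a subset of `L^p(ℝ)`. -/
def hardy (p : ℝ≥0∞) [Fact (1 ≤ p)] : Set (LpR p) :=
  {f | ∀ u : ℂ, 0 < u.im → ∫ x : ℝ, (f : ℝ → ℂ) x / ((x : ℂ) + u) = 0}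

/-- `L^p[t,∞)`, the subspace of functions vanishing a.e. on `(-∞, t)`. -/
def LpHalfLine (p : ℝ≥0∞) [Fact (1 ≤ p)] (t : ℝ) : Set (LpR p) :=
  {f | ∀ᵐ x : ℝ, x < t → (f : ℝ → ℂ) x = 0}

/-- The image of the Hardy space under multiplication by the function `φ`. -/
def mulHardy (p : ℝ≥0∞) [Fact (1 ≤ p)] (φ : ℝ → ℂ) : Set (LpR p) :=
  {g | ∃ f ∈ hardy p, (g : ℝ → ℂ) =ᵐ[volume] fun x => φ x * (f : ℝ → ℂ) x}

/-- The Fourier binest algebra: operators leaving invariant each `L^p[t,∞)` and each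
`e^{iλx}H^p(ℝ)`. -/
def fourierBinest (p : ℝ≥0∞) [Fact (1 ≤ p)] : Set (LpR p →L[ℂ] LpR p) :=
  {T | (∀ t : ℝ, ∀ f ∈ LpHalfLine p t, T f ∈ LpHalfLine p t) ∧
       (∀ l : ℝ, ∀ f ∈ mulHardy p (fun x => Complex.exp (Complex.I * l * x)),
          T f ∈ mulHardy p (fun x => Complex.exp (Complex.I * l * x)))}

/-- `T` is the `(p,q)`-integral operator with kernel `k`. -/
def IsIntOp (p q : ℝ≥0∞) [Fact (1 ≤ p)] [Fact (1 ≤ q)] (k : LpLq p q)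
    (T : LpR p →L[ℂ] LpR p) : Prop :=
  ∀ f : LpR p, (T f : ℝ → ℂ) =ᵐ[volume]
    fun x => ∫ y : ℝ, ((k : ℝ → LpR q) x : ℝ → ℂ) y * (f : ℝ → ℂ) y

/-- `G^p`, the set of `(p,q)`-integral operators on `L^p(ℝ)`. -/
def Gp (p q : ℝ≥0∞) [Fact (1 ≤ p)] [Fact (1 ≤ q)] : Set (LpR p →L[ℂ] LpR p) :=
  {T | ∃ k : LpLq p q, IsIntOp p q k T}


/-! Applying `Int k` to the indicator of `(a, b]` shows that `∫_a^b k(x)` vanishes for a.e.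
`x < a`. Taking all rational `a, b` at once, for a.e. `x` the primitive of `k(x)` from any
rational `a > x` vanishes at the rationals beyond `a`, hence by continuity on all of `(a, ∞)`;
by Lebesgue's differentiation theorem `k(x)` then vanishes a.e. on `(x, ∞)`. -/

theorem indicatorConstLp_mem_LpHalfLine {p : ℝ≥0∞} [Fact (1 ≤ p)] {t : ℝ} {s : Set ℝ}
    (hs : MeasurableSet s) (hμs : volume s ≠ ∞) (hst : s ⊆ Set.Ici t) (c : ℂ) :
    indicatorConstLp p hs hμs c ∈ LpHalfLine p t := by
  filter_upwards [indicatorConstLp_coeFn (p := p) (hs := hs) (hμs := hμs) (c := c)]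
    with x hx hxt
  rw [hx, Set.indicator_of_notMem fun hxs => (hst hxs).not_gt hxt]

theorem IsIntOp.ae_setIntegral_kernel_eq_zero {p q : ℝ≥0∞} [Fact (1 ≤ p)] [Fact (1 ≤ q)]
    {k : LpLq p q} {T : LpR p →L[ℂ] LpR p} (hT : IsIntOp p q k T) {t : ℝ}
    (hinv : ∀ f ∈ LpHalfLine p t, T f ∈ LpHalfLine p t) {s : Set ℝ} (hs : MeasurableSet s)
    (hμs : volume s ≠ ∞) (hst : s ⊆ Set.Ici t) :
    ∀ᵐ x : ℝ, x < t → ∫ y in s, ((k : ℝ → LpR q) x : ℝ → ℂ) y = 0 := by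
  set f : LpR p := indicatorConstLp p hs hμs 1
  have hf : (f : ℝ → ℂ) =ᵐ[volume] s.indicator 1 := indicatorConstLp_coeFn
  filter_upwards [hinv f (indicatorConstLp_mem_LpHalfLine hs hμs hst 1), hT f]
    with x hTf_zero hTf_eq hxt
  calc ∫ y in s, ((k : ℝ → LpR q) x : ℝ → ℂ) y
      = ∫ y, ((k : ℝ → LpR q) x : ℝ → ℂ) y * (f : ℝ → ℂ) y := by
        rw [← integral_indicator hs]
        refine integral_congr_ae (hf.mono fun y hy => ?_)
        by_cases hys : y ∈ s <;> simp [hy, hys]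
    _ = 0 := hTf_eq ▸ hTf_zero hxt

theorem Continuous.eqOn_Ioi_of_forall_ratCast {E : Type*} [TopologicalSpace E] [T2Space E]
    {f g : ℝ → E} (hf : Continuous f) (hg : Continuous g) {c : ℝ}
    (h : ∀ r : ℚ, c < r → f r = g r) : Set.EqOn f g (Set.Ioi c) := by
  refine Set.EqOn.of_subset_closure (fun y hy => ?_) hf.continuousOn hg.continuousOn
    Set.inter_subset_left (Rat.denseRange_cast.open_subset_closure_inter isOpen_Ioi)
  obtain ⟨hcy, r, rfl⟩ := hy
  exact h r hcy

theorem MeasureTheory.LocallyIntegrable.ae_eq_zero_of_setIntegral_Ioc_ratCast_eq_zero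
    {E : Type*} [NormedAddCommGroup E] [NormedSpace ℝ E] [CompleteSpace E] {g : ℝ → E}
    (hg : LocallyIntegrable g volume) {c : ℝ}
    (h : ∀ a b : ℚ, c < a → ∫ t in Set.Ioc (a : ℝ) b, g t = 0) :
    ∀ᵐ y : ℝ, c < y → g y = 0 := by
  have hgi : ∀ a b : ℝ, IntervalIntegrable g volume a b := fun a b =>
    (hg.integrableOn_isCompact isCompact_uIcc).intervalIntegrable
  have hprim :
      ∀ a : ℚ, c < a → Set.EqOn (fun b => ∫ t in (a : ℝ)..b, g t) 0 (Set.Ioi a) :=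
    fun a hca => (intervalIntegral.continuous_primitive (fun _ _ => hgi _ _) _)
      |>.eqOn_Ioi_of_forall_ratCast continuous_const fun b hab => by
        rw [intervalIntegral.integral_of_le hab.le]
        exact h a b hca
  filter_upwards [LocallyIntegrable.ae_hasDerivAt_integral hg] with y hderiv hcy
  obtain ⟨a, hca, hay⟩ := exists_rat_btwn hcy
  have hzero : (fun b => ∫ t in (a : ℝ)..b, g t) =ᶠ[𝓝 y] 0 :=
    Filter.eventuallyEq_of_mem (isOpen_Ioi.mem_nhds hay) (hprim a (mod_cast hca))
  exact (hderiv a).unique ((hasDerivAt_const y 0).congr_of_eventuallyEq hzero)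

theorem kernel_supported_below_diagonal_general
    (p q : ℝ≥0∞) [Fact (1 ≤ p)] [Fact (1 ≤ q)]
    (k : LpLq p q) (T : LpR p →L[ℂ] LpR p) (hT : IsIntOp p q k T)
    (hinv : ∀ t : ℝ, ∀ f ∈ LpHalfLine p t, T f ∈ LpHalfLine p t) :
    ∀ᵐ x : ℝ, ∀ᵐ y : ℝ, x < y → ((k : ℝ → LpR q) x : ℝ → ℂ) y = 0 := by
  have hIoc : ∀ᵐ x : ℝ, ∀ a b : ℚ, x < a →
      ∫ y in Set.Ioc (a : ℝ) b, ((k : ℝ → LpR q) x : ℝ → ℂ) y = 0 := by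
    refine ae_all_iff.2 fun a => ae_all_iff.2 fun b => ?_
    exact hT.ae_setIntegral_kernel_eq_zero (hinv a) measurableSet_Ioc measure_Ioc_lt_top.ne
      (Set.Ioc_subset_Ioi_self.trans Set.Ioi_subset_Ici_self)
  filter_upwards [hIoc] with x hx
  exact ((Lp.memLp _).locallyIntegrable Fact.out)
    |>.ae_eq_zero_of_setIntegral_Ioc_ratCast_eq_zero hx

/-- If the integral operator `Int k` leaves each `L^p[t,∞)` invariant,
then `k(x)(y) = 0` for almost every pair `(x,y)` with `y > x`. -/
theorem kernel_supported_below_diagonal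
    (p q : ℝ≥0∞) [Fact (1 ≤ p)] [Fact (1 ≤ q)]
    (hp : 1 < p) (hp' : p ≠ ⊤) (hq : 1 < q) (hq' : q ≠ ⊤)
    (hpq : 1 / p + 1 / q = 1)
    (k : LpLq p q) (T : LpR p →L[ℂ] LpR p) (hT : IsIntOp p q k T)
    (hinv : ∀ t : ℝ, ∀ f ∈ LpHalfLine p t, T f ∈ LpHalfLine p t) :
    ∀ᵐ x : ℝ, ∀ᵐ y : ℝ, x < y → ((k : ℝ → LpR q) x : ℝ → ℂ) y = 0 :=
  kernel_supported_below_diagonal_general p q k T hT hinv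

end
end

section
/- Let φ ∈ L¹(ℝ) and p ∈ [1,∞). Then the convolution operator Δ_φ f = φ * f is bounded on L^p(ℝ) with ‖Δ_φ‖ ≤ ‖φ‖_1. Moreover, if φ has essential support contained in [0,∞), then Δ_φ belongs to the closure in the strong operator topology of the algebra generated by the translation operators {D_t : t ≥ 0}. -/
open MeasureTheory Complex Filter Topology
open scoped ENNReal NNReal

noncomputable section

/-! Translation `D_t` is a strongly continuous isometry of `L^p(ℝ)` for `p < ∞`, so
`Δ_φ f = ∫ φ(y) D_y f dy` is a Bochner integral in `L^p`, of norm at most `‖φ‖₁ ‖f‖_p`; Fubini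
against sets of finite measure identifies it with the pointwise convolution. For finitely many
`f₁, …, fₙ`, the integrand `y ↦ (φ(y) D_y f_i)_i` takes values a.e. in the span of
`{(D_t f_i)_i : t ≥ 0}`, so its integral lies in the closure of that span; and SOT-neighbourhoods
only see finitely many `f_i`. -/

theorem mem_closure_of_forall_finset_restrict_mem_closure {ι : Type*} {π : ι → Type*}
    [∀ i, TopologicalSpace (π i)] {S : Set (∀ i, π i)} {x : ∀ i, π i}
    (h : ∀ I : Finset ι, I.restrict x ∈ closure (I.restrict '' S)) : x ∈ closure S := by
  rw [mem_closure_iff_nhds]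
  intro U hU
  rw [nhds_pi, Filter.mem_pi] at hU
  obtain ⟨I, hI, V, hV, hVU⟩ := hU
  have hW : Set.univ.pi (fun i : hI.toFinset => V i) ∈ 𝓝 (hI.toFinset.restrict x) :=
    set_pi_mem_nhds Set.finite_univ fun i _ => hV i
  obtain ⟨_, hzW, z, hzS, rfl⟩ := mem_closure_iff_nhds.1 (h hI.toFinset) _ hW
  exact ⟨z, hVU fun i hi => hzW ⟨i, hI.mem_toFinset.2 hi⟩ trivial, hzS⟩

theorem integral_mem_of_ae_mem {α E : Type*} [MeasurableSpace α] {μ : Measure α}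
    [NormedAddCommGroup E] [NormedSpace ℝ E] [CompleteSpace E] {M : Submodule ℝ E}
    (hM : IsClosed (M : Set E)) {g : α → E} (hg : Integrable g μ) (hgM : ∀ᵐ y ∂μ, g y ∈ M) :
    ∫ y, g y ∂μ ∈ M := by
  have : IsClosed (M : Set E) := hM
  rw [← Submodule.Quotient.mk_eq_zero]
  change M.mkQL (∫ y, g y ∂μ) = 0
  rw [← ContinuousLinearMap.integral_comp_comm _ hg]
  refine integral_eq_zero_of_ae ?_
  filter_upwards [hgM] with y hy
  simpa using hy

theorem integral_apply_mem_closure_of_ae_mem {α ι X : Type*} [MeasurableSpace α] {μ : Measure α}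
    [NormedAddCommGroup X] [NormedSpace ℝ X] [CompleteSpace X] {N : Submodule ℝ (ι → X)}
    {g : α → ι → X} (hg : ∀ i, Integrable (fun y => g y i) μ) (hgN : ∀ᵐ y ∂μ, g y ∈ N) :
    (fun i => ∫ y, g y i ∂μ) ∈ closure (N : Set (ι → X)) := by
  refine mem_closure_of_forall_finset_restrict_mem_closure fun I => ?_
  let NI := N.map (LinearMap.funLeft ℝ X ((↑) : I → ι))
  have hNI : I.restrict '' (N : Set (ι → X)) = NI := by rw [Submodule.map_coe]; rfl
  have hmem : ∫ y, I.restrict (g y) ∂μ ∈ NI.topologicalClosure :=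
    integral_mem_of_ae_mem NI.isClosed_topologicalClosure (Integrable.of_eval fun i => hg i)
      (hgN.mono fun y hy => NI.le_topologicalClosure ⟨g y, hy, rfl⟩)
  have heq : I.restrict (fun i => ∫ y, g y i ∂μ) = ∫ y, I.restrict (g y) ∂μ := by
    ext i; exact (eval_integral (f := fun y => I.restrict (g y)) (fun i => hg i) i).symm
  rwa [heq, hNI, ← Submodule.topologicalClosure_coe]

namespace MeasureTheory.Lp

variable {α E : Type*} [MeasurableSpace α] {μ : Measure α} [NormedAddCommGroup E]
  {p : ℝ≥0∞} [Fact (1 ≤ p)] {s : Set α}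

theorem integrableOn (f : Lp E p μ) (hs : μ s ≠ ∞) : IntegrableOn f s μ :=
  have : Fact (μ s < ∞) := ⟨hs.lt_top⟩
  ((Lp.memLp f).restrict s).integrable Fact.out

theorem setIntegral_norm_le (f : Lp E p μ) (hs : μ s ≠ ∞) :
    ∫ x in s, ‖f x‖ ∂μ ≤ (μ s ^ (1 - 1 / p.toReal)).toReal * ‖f‖ := by
  have hf := (Lp.aestronglyMeasurable f).restrict (s := s)
  have hexp : 0 ≤ 1 - 1 / p.toReal := by
    rcases eq_or_ne p ∞ with rfl | hp
    · simp
    · have : 1 ≤ p.toReal := by simpa using ENNReal.toReal_mono hp (Fact.out : 1 ≤ p)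
      simp [inv_le_one_of_one_le₀ this]
  have hHolder : eLpNorm f 1 (μ.restrict s) ≤ eLpNorm f p μ * μ s ^ (1 - 1 / p.toReal) := by
    calc eLpNorm f 1 (μ.restrict s)
        ≤ eLpNorm f p (μ.restrict s) * μ.restrict s Set.univ ^ (1 / 1 - 1 / p.toReal) :=
          eLpNorm_le_eLpNorm_mul_rpow_measure_univ (Fact.out : 1 ≤ p) hf
      _ ≤ eLpNorm f p μ * μ s ^ (1 - 1 / p.toReal) := by
          rw [Measure.restrict_apply_univ, div_one]
          gcongr
          exact Measure.restrict_le_self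
  rw [integral_norm_eq_lintegral_enorm hf, ← eLpNorm_one_eq_lintegral_enorm, Lp.norm_def,
    mul_comm, ← ENNReal.toReal_mul]
  exact ENNReal.toReal_mono (ENNReal.mul_ne_top (Lp.eLpNorm_ne_top f)
    (ENNReal.rpow_ne_top_of_nonneg hexp hs)) hHolder

variable [NormedSpace ℝ E]

variable (E p) in
def setIntegralL (hs : μ s ≠ ∞) : Lp E p μ →L[ℝ] E :=
  LinearMap.mkContinuous
    { toFun := fun f => ∫ x in s, f x ∂μ
      map_add' := fun f g => by
        rw [integral_congr_ae (ae_restrict_of_ae (Lp.coeFn_add f g))]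
        exact integral_add (integrableOn f hs) (integrableOn g hs)
      map_smul' := fun c f => by
        rw [integral_congr_ae (ae_restrict_of_ae (Lp.coeFn_smul c f))]
        exact integral_smul c _ }
    (μ s ^ (1 - 1 / p.toReal)).toReal
    fun f => (norm_integral_le_integral_norm _).trans (setIntegral_norm_le f hs)

theorem coeFn_integral_ae_eq [CompleteSpace E] {β : Type*} [MeasurableSpace β] {ν : Measure β}
    [SigmaFinite μ] [SFinite ν] {F : β → Lp E p μ} (hF : Integrable F ν) {K : α → β → E}
    (hFK : ∀ y, F y =ᵐ[μ] fun x => K x y)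
    (hK : ∀ s, μ s < ∞ → Integrable (Function.uncurry K) ((μ.restrict s).prod ν)) :
    ⇑(∫ y, F y ∂ν) =ᵐ[μ] fun x => ∫ y, K x y ∂ν := by
  refine ae_eq_of_forall_setIntegral_eq_of_sigmaFinite
    (fun s _ hs => Lp.integrableOn _ hs.ne) (fun s _ hs => (hK s hs).integral_prod_left)
    fun s _ hs => ?_
  calc ∫ x in s, (∫ y, F y ∂ν) x ∂μ
      = ∫ y, setIntegralL E p hs.ne (F y) ∂ν :=
        ((setIntegralL E p hs.ne).integral_comp_comm hF).symm
    _ = ∫ y, ∫ x in s, K x y ∂μ ∂ν :=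
        integral_congr_ae (.of_forall fun y => integral_congr_ae (ae_restrict_of_ae (hFK y)))
    _ = ∫ x in s, ∫ y, K x y ∂ν ∂μ := (integral_integral_swap (hK s hs)).symm

end MeasureTheory.Lp

section Translation

variable {E : Type*} [NormedAddCommGroup E] [NormedSpace ℂ E] {p : ℝ≥0∞} [Fact (1 ≤ p)]

variable (E p) in
def translationCLM (t : ℝ) : Lp E p (volume : Measure ℝ) →L[ℂ] Lp E p (volume : Measure ℝ) :=
  (Lp.compMeasurePreservingₗᵢ ℂ (fun x : ℝ => x - t)
    (measurePreserving_sub_right volume t)).toContinuousLinearMap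

theorem coeFn_translationCLM (t : ℝ) (f : Lp E p volume) :
    translationCLM E p t f =ᵐ[volume] fun x => f (x - t) :=
  Lp.coeFn_compMeasurePreserving f (measurePreserving_sub_right volume t)

@[simp]
theorem norm_translationCLM_apply (t : ℝ) (f : Lp E p volume) :
    ‖translationCLM E p t f‖ = ‖f‖ :=
  LinearIsometry.norm_map _ f

theorem continuous_translationCLM_apply (hp : p ≠ ∞) (f : Lp E p volume) :
    Continuous fun t => translationCLM E p t f :=
  continuous_const.compMeasurePreservingLp (g := fun t => ContinuousMap.id ℝ - .const ℝ t)
    (continuous_const.sub ContinuousMap.continuous_const') _ hp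

variable {φ : ℝ → ℂ}

theorem integrable_smul_translationCLM_apply (hp : p ≠ ∞) (hφ : Integrable φ)
    (f : Lp E p volume) : Integrable (fun y => φ y • translationCLM E p y f) :=
  (hφ.norm.mul_const ‖f‖).mono'
    (hφ.aestronglyMeasurable.smul (continuous_translationCLM_apply hp f).aestronglyMeasurable)
    (.of_forall fun y => by simp [norm_smul])

def convolutionCLM (hp : p ≠ ∞) (hφ : Integrable φ) :
    Lp E p (volume : Measure ℝ) →L[ℂ] Lp E p (volume : Measure ℝ) :=
  LinearMap.mkContinuous
    { toFun := fun f => ∫ y, φ y • translationCLM E p y f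
      map_add' := fun f g => by
        simp only [map_add, smul_add]
        exact integral_add (integrable_smul_translationCLM_apply hp hφ f)
          (integrable_smul_translationCLM_apply hp hφ g)
      map_smul' := fun c f => by
        simp only [map_smul, smul_comm (φ _) c, RingHom.id_apply]
        exact integral_smul c _ }
    (∫ y, ‖φ y‖)
    fun f => (norm_integral_le_integral_norm _).trans_eq <| by
      simp only [norm_smul, norm_translationCLM_apply, integral_mul_const]

theorem norm_convolutionCLM_le (hp : p ≠ ∞) (hφ : Integrable φ) :
    ‖(convolutionCLM hp hφ : Lp E p volume →L[ℂ] Lp E p volume)‖ ≤ ∫ y, ‖φ y‖ :=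
  LinearMap.mkContinuous_norm_le _ (integral_nonneg fun _ => norm_nonneg _) _

theorem integrable_convolution_kernel (hφ : Integrable φ) (f : Lp E p volume)
    {s : Set ℝ} (hs : volume s ≠ ∞) :
    Integrable (fun z : ℝ × ℝ => φ z.2 • f (z.1 - z.2)) ((volume.restrict s).prod volume) := by
  have hmeas : AEStronglyMeasurable (fun z : ℝ × ℝ => φ z.2 • f (z.1 - z.2))
      ((volume.restrict s).prod volume) :=
    (hφ.aestronglyMeasurable.comp_quasiMeasurePreserving
      Measure.quasiMeasurePreserving_snd).smul
      ((Lp.stronglyMeasurable f).comp_measurable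
        (measurable_fst.sub measurable_snd)).aestronglyMeasurable
  have hslice : ∀ y, ∫ x in s, ‖φ y • f (x - y)‖ =
      ‖φ y‖ * ∫ x in s, ‖translationCLM E p y f x‖ := fun y => by
    rw [← integral_const_mul]
    refine integral_congr_ae ?_
    filter_upwards [ae_restrict_of_ae (coeFn_translationCLM y f)] with x hx
    rw [hx, norm_smul]
  rw [integrable_prod_iff' hmeas]
  refine ⟨.of_forall fun y => ?_, ?_⟩
  · exact ((Lp.integrableOn (translationCLM E p y f) hs).congr
      (ae_restrict_of_ae (coeFn_translationCLM y f))).smul (φ y)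
  · refine (hφ.norm.mul_const ((volume s ^ (1 - 1 / p.toReal)).toReal * ‖f‖)).mono'
      hmeas.norm.prod_swap.integral_prod_right' (.of_forall fun y => ?_)
    rw [Real.norm_of_nonneg (integral_nonneg fun _ => norm_nonneg _), hslice]
    gcongr
    simpa using Lp.setIntegral_norm_le (translationCLM E p y f) hs

theorem coeFn_convolutionCLM [CompleteSpace E] (hp : p ≠ ∞) (hφ : Integrable φ)
    (f : Lp E p volume) :
    convolutionCLM hp hφ f =ᵐ[volume] fun x => ∫ y, φ y • f (x - y) :=
  Lp.coeFn_integral_ae_eq (integrable_smul_translationCLM_apply hp hφ f)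
    (fun y => by
      filter_upwards [Lp.coeFn_smul (φ y) (translationCLM E p y f), coeFn_translationCLM y f]
        with x hsmul htrans
      rw [hsmul, Pi.smul_apply, htrans])
    fun _ hs => integrable_convolution_kernel hφ f hs.ne

theorem convolutionCLM_mem_closure_span [CompleteSpace E] (hp : p ≠ ∞) (hφ : Integrable φ)
    {S : Set ℝ} (hφS : ∀ᵐ y, y ∉ S → φ y = 0) :
    ⇑(convolutionCLM (E := E) hp hφ) ∈
      closure ((fun A : Lp E p (volume : Measure ℝ) →L[ℂ] Lp E p volume => ⇑A) ''
        Submodule.span ℂ (translationCLM E p '' S)) := by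
  let M := Submodule.span ℂ (translationCLM E p '' S)
  let N : Submodule ℝ (Lp E p (volume : Measure ℝ) → Lp E p volume) :=
    (M.restrictScalars ℝ).map (LinearMap.ltoFun ℂ _ _ ℝ ∘ₗ ContinuousLinearMap.coeLM ℝ)
  have hN : (N : Set (Lp E p (volume : Measure ℝ) → Lp E p volume)) =
      (fun A : Lp E p (volume : Measure ℝ) →L[ℂ] Lp E p volume => ⇑A) '' SetLike.coe M :=
    Submodule.map_coe _ _
  rw [← hN]
  refine integral_apply_mem_closure_of_ae_mem (g := fun y => ⇑(φ y • translationCLM E p y))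
    (integrable_smul_translationCLM_apply hp hφ) ?_
  filter_upwards [hφS] with y hy
  rw [← SetLike.mem_coe, hN]
  refine ⟨_, ?_, rfl⟩
  by_cases hyS : y ∈ S
  · exact M.smul_mem _ (Submodule.subset_span ⟨y, hyS, rfl⟩)
  · rw [hy hyS, zero_smul]
    exact M.zero_mem

end Translation

theorem isTransOp_translationCLM {p : ℝ≥0∞} [Fact (1 ≤ p)] (t : ℝ) :
    IsTransOp p t (translationCLM ℂ p t) :=
  coeFn_translationCLM t

/-- For `φ ∈ L¹(ℝ)` and `p ∈ [1,∞)`, the convolution operator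
`Δ_φ f = φ * f` is bounded on `L^p(ℝ)` with `‖Δ_φ‖ ≤ ‖φ‖₁`; moreover, if `φ` is essentially
supported in `[0,∞)`, then `Δ_φ` lies in the SOT-closure of the algebra generated by the
translations `{D_t : t ≥ 0}`. -/
theorem convolution_operator_bounded_and_in_translation_algebra
    (p : ℝ≥0∞) [Fact (1 ≤ p)] (hp' : p ≠ ⊤)
    (φ : ℝ → ℂ) (hφ : MeasureTheory.Integrable φ (volume : Measure ℝ)) :
    ∃ T : LpR p →L[ℂ] LpR p,
      (∀ f : LpR p, (T f : ℝ → ℂ) =ᵐ[volume] fun x =>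
        ∫ y : ℝ, φ y * (f : ℝ → ℂ) (x - y)) ∧
      ‖T‖ ≤ (∫ y : ℝ, ‖φ y‖) ∧
      ((∀ᵐ y : ℝ, y < 0 → φ y = 0) →
        ⇑T ∈ closure ((fun A : LpR p →L[ℂ] LpR p => (A : LpR p → LpR p)) ''
          ((Algebra.adjoin ℂ {S : LpR p →L[ℂ] LpR p | ∃ t : ℝ, 0 ≤ t ∧ IsTransOp p t S} :
            Subalgebra ℂ (LpR p →L[ℂ] LpR p)) : Set (LpR p →L[ℂ] LpR p)))) := by
  refine ⟨convolutionCLM hp' hφ, fun f => ?_, norm_convolutionCLM_le hp' hφ, fun hsupp => ?_⟩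
  · simpa only [smul_eq_mul] using coeFn_convolutionCLM hp' hφ f
  · have hspan : Submodule.span ℂ (translationCLM ℂ p '' Set.Ici 0) ≤
        Subalgebra.toSubmodule (Algebra.adjoin ℂ
          {S : LpR p →L[ℂ] LpR p | ∃ t : ℝ, 0 ≤ t ∧ IsTransOp p t S}) := by
      rw [Submodule.span_le]
      rintro _ ⟨t, ht, rfl⟩
      exact Algebra.subset_adjoin ⟨t, ht, isTransOp_translationCLM t⟩
    exact closure_mono (Set.image_mono hspan)
      (convolutionCLM_mem_closure_span hp' hφ (hsupp.mono fun y hy hyS => hy (not_le.1 hyS)))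

end
end

section
/- Let φ ∈ L^∞(ℝ) and suppose the multiplication operator M_φ on L^∞(ℝ), (M_φ f)(x) = φ(x)f(x), belongs to the closure in the strong operator topology of the algebra of operators on L^∞(ℝ) generated by {M_λ : λ ≥ 0} and {D_μ : μ ≥ 0}. Then φ belongs to AAP(ℝ), the closure in the uniform (L^∞) norm of the linear span of {x ↦ e^{iλx} : λ ≥ 0}. Consequently, since AAP(ℝ) is a proper subset of H^∞(ℝ), the SOT-closed algebra A_par^∞ generated by these semigroups on L^∞(ℝ) does not contain M_φ for φ ∈ H^∞(ℝ)∖AAP(ℝ). -/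
open MeasureTheory Complex Filter Topology
open scoped ENNReal NNReal

noncomputable section

instance : Fact ((1 : ℝ≥0∞) ≤ ⊤) := ⟨le_top⟩

/-- `φ` (an element of `L^∞(ℝ)`) is, within `ε` in the `L^∞` norm for any `ε > 0`,
a finite linear combination of the analytic exponentials `x ↦ e^{iλx}`, `λ ≥ 0`;
i.e. `φ` agrees a.e. with an element of `AAP(ℝ)`. -/
def MemAAP (φ : LpR ⊤) : Prop :=
  ∀ ε : ℝ, 0 < ε → ∃ (n : ℕ) (c : Fin n → ℂ) (l : Fin n → ℝ),
    (∀ i, 0 ≤ l i) ∧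
    ∀ᵐ x : ℝ, ‖(φ : ℝ → ℂ) x - ∑ i, c i * Complex.exp (Complex.I * (l i) * x)‖ ≤ ε


/-!
Let `AAP ⊆ L^∞(ℝ)` be the closed linear span of the exponentials `e_λ(x) = e^{iλx}`, `λ ≥ 0`.
The operators leaving a closed subspace invariant form an SOT-closed algebra. Since
`M_λ e_μ = e_{λ+μ}` and `D_m e_μ = e^{-iμm} e_μ`, every generator leaves `AAP` invariant, hence
so does every operator of the parabolic algebra, and then `φ = M_φ e_0 ∈ AAP`.
-/

def Submodule.stabilizerAlgebra {R E : Type*} [CommSemiring R] [AddCommGroup E]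
    [TopologicalSpace E] [Module R E] [IsTopologicalAddGroup E] [ContinuousConstSMul R E]
    (V : Submodule R E) : Subalgebra R (E →L[R] E) where
  carrier := {T | ∀ f ∈ V, T f ∈ V}
  mul_mem' hS hT f hf := hS _ (hT f hf)
  one_mem' _ hf := hf
  add_mem' hS hT f hf := V.add_mem (hS f hf) (hT f hf)
  zero_mem' _ _ := V.zero_mem
  algebraMap_mem' r _ hf := V.smul_mem r hf

theorem Submodule.topologicalClosure_span_le_comap {R E F : Type*} [Semiring R]
    [AddCommMonoid E] [TopologicalSpace E] [Module R E] [ContinuousAdd E]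
    [ContinuousConstSMul R E] [AddCommMonoid F] [TopologicalSpace F] [Module R F]
    (T : E →L[R] F) {s : Set E} {V : Submodule R F} (hV : IsClosed (V : Set F))
    (hs : ∀ x ∈ s, T x ∈ V) :
    (Submodule.span R s).topologicalClosure ≤ V.comap (T : E →ₗ[R] F) :=
  Submodule.topologicalClosure_minimal _ (Submodule.span_le.mpr hs) (hV.preimage T.continuous)

theorem isSOTClosed_stabilizerAlgebra (p : ℝ≥0∞) [Fact (1 ≤ p)] {V : Submodule ℂ (LpR p)}
    (hV : IsClosed (V : Set (LpR p))) : IsSOTClosed p V.stabilizerAlgebra := by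
  intro T hT f hf
  have hmaps : Set.MapsTo (fun g : LpR p → LpR p => g f)
      ((fun A : LpR p →L[ℂ] LpR p => (A : LpR p → LpR p)) '' V.stabilizerAlgebra) V := by
    rintro _ ⟨A, hA, rfl⟩
    exact hA f hf
  simpa [hV.closure_eq] using map_mem_closure (continuous_apply f) hT hmaps

theorem MeasureTheory.Lp.ae_norm_le_norm_top {α E : Type*} {m : MeasurableSpace α}
    {μ : Measure α} [NormedAddCommGroup E] (f : Lp E ∞ μ) : ∀ᵐ x ∂μ, ‖f x‖ ≤ ‖f‖ := by
  rw [Lp.norm_def, toReal_eLpNorm (Lp.aestronglyMeasurable f)]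
  exact ae_le_lpNorm_exponent_top (Lp.memLp f)

def expLp (l : ℝ) : LpR ⊤ :=
  (memLp_top_of_bound (by fun_prop : Continuous fun x : ℝ => exp (I * l * x)).aestronglyMeasurable
    1 (ae_of_all _ fun x => by simp [Complex.norm_exp])).toLp _

theorem coeFn_expLp (l : ℝ) : ⇑(expLp l) =ᵐ[volume] fun x : ℝ => exp (I * l * x) :=
  MemLp.coeFn_toLp _

def aapSubmodule : Submodule ℂ (LpR ⊤) :=
  (Submodule.span ℂ (expLp '' Set.Ici 0)).topologicalClosure

theorem isClosed_aapSubmodule : IsClosed (aapSubmodule : Set (LpR ⊤)) :=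
  Submodule.isClosed_topologicalClosure _

theorem expLp_mem_aapSubmodule {l : ℝ} (hl : 0 ≤ l) : expLp l ∈ aapSubmodule :=
  Submodule.le_topologicalClosure _ (Submodule.subset_span ⟨l, hl, rfl⟩)

theorem memAAP_of_mem_aapSubmodule {φ : LpR ⊤} (hφ : φ ∈ aapSubmodule) : MemAAP φ := by
  intro ε hε
  rw [← SetLike.mem_coe, aapSubmodule, Submodule.topologicalClosure_coe] at hφ
  obtain ⟨ψ, hψ, hφψ⟩ := Metric.mem_closure_iff.mp hφ ε hε
  obtain ⟨n, c, g, rfl⟩ := Submodule.mem_span_set'.mp hψ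
  choose l hl hgl using fun i => (g i).2
  refine ⟨n, c, l, hl, ?_⟩
  have hsum : ∑ i, c i • (g i : LpR ⊤) = ∑ i, c i • expLp (l i) := by simp [hgl]
  rw [hsum, dist_eq_norm] at hφψ
  have hcoe : ∀ᵐ x : ℝ, ∀ i, (c i • expLp (l i) : LpR ⊤) x = c i * exp (I * l i * x) := by
    rw [ae_all_iff]
    intro i
    filter_upwards [Lp.coeFn_smul (c i) (expLp (l i)), coeFn_expLp (l i)] with x h1 h2
    simp [h1, h2]
  filter_upwards [Lp.ae_norm_le_norm_top (φ - ∑ i, c i • expLp (l i)),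
    Lp.coeFn_sub φ (∑ i, c i • expLp (l i)),
    Lp.coeFn_fun_finsetSum Finset.univ fun i => c i • expLp (l i), hcoe] with x hx hsub hs hc
  simp only [hsub, Pi.sub_apply, hs, hc] at hx
  exact hx.trans hφψ.le

theorem IsMulOp.apply_expLp {T : LpR ⊤ →L[ℂ] LpR ⊤} {l : ℝ}
    (hT : IsMulOp ⊤ (fun x => exp (I * l * x)) T) (μ : ℝ) : T (expLp μ) = expLp (l + μ) := by
  refine Lp.ext ?_
  filter_upwards [hT (expLp μ), coeFn_expLp μ, coeFn_expLp (l + μ)] with x hTx hμ hlμ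
  rw [hTx, hμ, hlμ, ← Complex.exp_add]
  push_cast
  ring_nf

theorem IsTransOp.apply_expLp {T : LpR ⊤ →L[ℂ] LpR ⊤} {m : ℝ} (hT : IsTransOp ⊤ m T) (μ : ℝ) :
    T (expLp μ) = exp (-(I * μ * m)) • expLp μ := by
  refine Lp.ext ?_
  have hshift : (fun x : ℝ => expLp μ (x - m)) =ᵐ[volume] fun x : ℝ => exp (I * μ * (x - m : ℝ)) :=
    (measurePreserving_sub_right volume m).quasiMeasurePreserving.ae_eq_comp (coeFn_expLp μ)
  filter_upwards [hT (expLp μ), hshift, Lp.coeFn_smul (exp (-(I * μ * m))) (expLp μ),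
    coeFn_expLp μ] with x hTx hx hs hμ
  rw [hTx, hx, hs, Pi.smul_apply, hμ, smul_eq_mul, ← Complex.exp_add]
  push_cast
  ring_nf

theorem IsMulOp.apply_expLp_zero {φ : LpR ⊤} {T : LpR ⊤ →L[ℂ] LpR ⊤}
    (hT : IsMulOp ⊤ φ T) : T (expLp 0) = φ := by
  refine Lp.ext ?_
  filter_upwards [hT (expLp 0), coeFn_expLp 0] with x hTx h0
  simp [hTx, h0]

theorem parabolicGens_top_subset_stabilizerAlgebra :
    parabolicGens ⊤ ⊆ aapSubmodule.stabilizerAlgebra := by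
  intro T hT f hf
  refine Submodule.topologicalClosure_span_le_comap T isClosed_aapSubmodule ?_ hf
  rintro _ ⟨μ, hμ, rfl⟩
  rcases hT with ⟨l, hl, hT⟩ | ⟨m, -, hT⟩
  · rw [hT.apply_expLp]
    exact expLp_mem_aapSubmodule (add_nonneg hl hμ)
  · rw [hT.apply_expLp]
    exact aapSubmodule.smul_mem _ (expLp_mem_aapSubmodule hμ)

theorem parabolicAlgebra_top_subset_stabilizerAlgebra :
    parabolicAlgebra ⊤ ⊆ aapSubmodule.stabilizerAlgebra :=
  Set.sInter_subset_of_mem ⟨parabolicGens_top_subset_stabilizerAlgebra,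
    isSOTClosed_stabilizerAlgebra ⊤ isClosed_aapSubmodule, _, rfl⟩

theorem IsMulOp.memAAP_of_mem_parabolicAlgebra {φ : LpR ⊤} {T : LpR ⊤ →L[ℂ] LpR ⊤}
    (hT : IsMulOp ⊤ φ T) (hpar : T ∈ parabolicAlgebra ⊤) : MemAAP φ := by
  apply memAAP_of_mem_aapSubmodule
  rw [← hT.apply_expLp_zero]
  exact parabolicAlgebra_top_subset_stabilizerAlgebra hpar _ (expLp_mem_aapSubmodule le_rfl)

/-- If the multiplication operator `M_φ` on `L^∞(ℝ)` belongs to the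
SOT-closed algebra generated by `{M_λ : λ ≥ 0}` and `{D_μ : μ ≥ 0}` then `φ ∈ AAP(ℝ)`;
consequently `M_φ ∉ A_par^∞` whenever `φ ∉ AAP(ℝ)` (in particular for
`φ ∈ H^∞(ℝ) \ AAP(ℝ)`). -/
theorem mul_in_parabolicAlgebra_top_implies_AAP :
    (∀ (φ : LpR ⊤) (T : LpR ⊤ →L[ℂ] LpR ⊤),
      IsMulOp ⊤ (φ : ℝ → ℂ) T → T ∈ parabolicAlgebra ⊤ → MemAAP φ) ∧
    (∀ (φ : LpR ⊤) (T : LpR ⊤ →L[ℂ] LpR ⊤),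
      IsMulOp ⊤ (φ : ℝ → ℂ) T → ¬ MemAAP φ → T ∉ parabolicAlgebra ⊤) :=
  ⟨fun _ _ hT hpar => hT.memAAP_of_mem_parabolicAlgebra hpar,
    fun _ _ hT hφ hpar => hφ (hT.memAAP_of_mem_parabolicAlgebra hpar)⟩

end
end
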